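/- For any symmetric positive semidefinite initial value P₀ ∈ ℝ^{n×n} and B ∈ ℝ^{n×m}, the matrix ODE Ṗ(t) = -P(t) B Bᵀ P(t), P(0) = P₀, has the exact solution P(t) = P₀ (I + t B Bᵀ P₀)⁻¹ for all t ≥ 0, and I + t B Bᵀ P₀ is invertible for all t ≥ 0. -/

import Mathlib

/-!
Writing `P₀ = Sᴴ S`, Sylvester's determinant identity gives
`det (1 + t B Bᵀ Sᴴ S) = det (1 + S (t B Bᵀ) Sᴴ)`, and the right-hand matrix is the identity plus
a positive semidefinite matrix, hence positive definite. For the derivative, the resolvent identity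
`P t - P s = (s - t) • P t * B Bᵀ * P s` computes every difference quotient exactly, and continuity
of the matrix inverse passes to the limit `t → s`.
-/

open Matrix

attribute [local instance] Matrix.normedAddCommGroup Matrix.normedSpace

open Filter Topology

namespace Matrix

section PosSemidef

variable {n 𝕜 : Type*} [Fintype n] [DecidableEq n] [RCLike 𝕜]

open scoped MatrixOrder ComplexOrder

theorem isUnit_one_add_mul_of_posSemidef {Q A : Matrix n n 𝕜} (hQ : Q.PosSemidef)
    (hA : A.PosSemidef) : IsUnit (1 + Q * A) := by
  obtain ⟨S, rfl⟩ := CStarAlgebra.nonneg_iff_eq_star_mul_self.mp hA.nonneg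
  have hpd : (1 + S * Q * Sᴴ).PosDef :=
    PosDef.one.add_posSemidef (hQ.mul_mul_conjTranspose_same S)
  rw [isUnit_iff_isUnit_det, star_eq_conjTranspose, ← Matrix.mul_assoc, det_one_add_mul_comm,
    ← Matrix.mul_assoc]
  exact (isUnit_iff_isUnit_det _).mp hpd.isUnit

end PosSemidef

theorem mul_inv_one_add_smul_mul_sub {m n α : Type*} [Fintype m] [Fintype n] [DecidableEq n]
    [CommRing α] (K : Matrix n m α) (L : Matrix m n α) {s t : α}
    (hs : IsUnit (1 + s • (K * L))) (ht : IsUnit (1 + t • (K * L))) :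
    L * (1 + t • (K * L))⁻¹ - L * (1 + s • (K * L))⁻¹ =
      (s - t) • (L * (1 + t • (K * L))⁻¹ * K * (L * (1 + s • (K * L))⁻¹)) := by
  rw [← Matrix.mul_sub, inv_sub_inv (iff_of_true ht hs), add_sub_add_left_eq_sub, ← sub_smul]
  simp only [Matrix.mul_smul, Matrix.smul_mul, Matrix.mul_assoc]

section Calculus

variable {m n 𝕜 : Type*} [Fintype m] [Fintype n] [DecidableEq n] [NontriviallyNormedField 𝕜]

theorem continuousAt_inv_of_isUnit {A : 𝕜 → Matrix n n 𝕜} {t₀ : 𝕜} (hA : ContinuousAt A t₀)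
    (h : IsUnit (A t₀)) : ContinuousAt (fun t => (A t)⁻¹) t₀ := by
  have hdet : (A t₀).det ≠ 0 := ((isUnit_iff_isUnit_det _).mp h).ne_zero
  refine (continuousAt_matrix_inv _ ?_).comp hA
  simpa only [Ring.inverse_eq_inv'] using continuousAt_inv₀ hdet

theorem eventually_isUnit_of_isUnit {A : 𝕜 → Matrix n n 𝕜} {t₀ : 𝕜} (hA : ContinuousAt A t₀)
    (h : IsUnit (A t₀)) : ∀ᶠ t in 𝓝 t₀, IsUnit (A t) := by
  have hdet : (A t₀).det ≠ 0 := ((isUnit_iff_isUnit_det _).mp h).ne_zero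
  filter_upwards [(continuous_id.matrix_det.continuousAt.comp hA).eventually_ne hdet] with t ht
  exact (isUnit_iff_isUnit_det _).mpr (isUnit_iff_ne_zero.mpr ht)

theorem hasDerivAt_mul_inv_one_add_smul_mul (K : Matrix n m 𝕜) (L : Matrix m n 𝕜)
    {f : 𝕜 → Matrix m n 𝕜} (hf : ∀ t, f t = L * (1 + t • (K * L))⁻¹) {t₀ : 𝕜}
    (h : IsUnit (1 + t₀ • (K * L))) : HasDerivAt f (-(f t₀ * K * f t₀)) t₀ := by
  have hA : Continuous fun t : 𝕜 => 1 + t • (K * L) := by fun_prop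
  have hfc : ContinuousAt f t₀ := by
    rw [funext hf]
    exact (continuous_const.matrix_mul continuous_id).continuousAt.comp
      (continuousAt_inv_of_isUnit hA.continuousAt h)
  have hslope : slope f t₀ =ᶠ[𝓝[≠] t₀] fun t => -(f t * K * f t₀) := by
    filter_upwards [nhdsWithin_le_nhds (eventually_isUnit_of_isUnit hA.continuousAt h),
      self_mem_nhdsWithin] with t ht hne
    rw [slope_def_module, hf, hf, mul_inv_one_add_smul_mul_sub K L h ht, smul_smul,
      ← neg_sub t t₀, mul_neg, inv_mul_cancel₀ (sub_ne_zero.mpr hne), neg_one_smul]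
  have hlim : ContinuousAt (fun t => -(f t * K * f t₀)) t₀ :=
    ((continuous_id.matrix_mul continuous_const).matrix_mul
      continuous_const).neg.continuousAt.comp hfc
  exact hasDerivAt_iff_tendsto_slope.mpr
    ((hlim.tendsto.mono_left nhdsWithin_le_nhds).congr' hslope.symm)

end Calculus

end Matrix

/-- The matrix ODE `Ṗ = -P B Bᵀ P`, `P(0) = P₀` with `P₀` symmetric positive
semidefinite has the exact solution `P(t) = P₀ (I + t B Bᵀ P₀)⁻¹` for `t ≥ 0`,
and `I + t B Bᵀ P₀` is invertible for all `t ≥ 0`. -/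
theorem quadratic_part_exact_solution (n m : ℕ)
    (P₀ : Matrix (Fin n) (Fin n) ℝ) (B : Matrix (Fin n) (Fin m) ℝ)
    (hP₀ : P₀.PosSemidef)
    (P : ℝ → Matrix (Fin n) (Fin n) ℝ)
    (hPdef : ∀ t : ℝ, P t = P₀ * (1 + t • (B * Bᵀ * P₀))⁻¹) :
    (∀ t : ℝ, 0 ≤ t → IsUnit (1 + t • (B * Bᵀ * P₀))) ∧
    P 0 = P₀ ∧
    (∀ t : ℝ, 0 ≤ t → HasDerivAt P (-(P t * B * Bᵀ * P t)) t) := by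
  have hBBt : (B * Bᵀ).PosSemidef := by
    simpa only [conjTranspose_eq_transpose_of_trivial] using posSemidef_self_mul_conjTranspose B
  have hUnit (t : ℝ) (ht : 0 ≤ t) : IsUnit (1 + t • (B * Bᵀ * P₀)) := by
    rw [← Matrix.smul_mul]
    exact isUnit_one_add_mul_of_posSemidef (hBBt.smul ht) hP₀
  refine ⟨hUnit, by simp [hPdef], fun t ht => ?_⟩
  simpa only [Matrix.mul_assoc] using
    hasDerivAt_mul_inv_one_add_smul_mul (B * Bᵀ) P₀ hPdef (hUnit t ht)
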